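/- arXiv:math/0611538 — 2 statements merged into one kernel-verified Lean document; each statement's English description precedes it below -/
import Mathlib

section
/- For every integer n ≥ 1 and all real numbers θ and ζ, Σ_{π ∈ S_n} θ^{ℓ(π)} · ζ^{u(π)} = ∏_{j=0}^{n−2} (θ + ζ + j), where the sum is over all permutations π of {1,…,n} and the empty product (n = 1) equals 1. In particular, for θ, ζ > 0 the assignment P(π) = θ^{ℓ(π)} ζ^{u(π)} / (θ+ζ)_{n−1} defines a probability distribution on S_n which gives equal probability to all permutations with the same numbers of lower and upper records. -/
/-! Every permutation of `Fin (n + 1)` is obtained in exactly one way by choosing its last value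
`v` and the relative order `σ` of its first `n` values. Appending `v` does not change which of the
first `n` positions are records, and the new last position is a proper lower (upper) record exactly
when `v` is the smallest (largest) value. Summing the weight `θ ^ ℓ * ζ ^ u` over `v` therefore
multiplies it by `θ + ζ + (n - 1)` once `n ≥ 1`, which gives the rising factorial. -/

open Finset

/-- `π j` is a lower record: it is the minimum among the first `j+1` entries. -/
def isLowerRecord {n : ℕ} (π : Equiv.Perm (Fin n)) (j : Fin n) : Prop :=
  ∀ k, k ≤ j → π j ≤ π k

/-- `π j` is an upper record: it is the maximum among the first `j+1` entries. -/
def isUpperRecord {n : ℕ} (π : Equiv.Perm (Fin n)) (j : Fin n) : Prop :=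
  ∀ k, k ≤ j → π k ≤ π j

instance {n : ℕ} (π : Equiv.Perm (Fin n)) (j : Fin n) : Decidable (isLowerRecord π j) :=
  inferInstanceAs (Decidable (∀ k, k ≤ j → π j ≤ π k))

instance {n : ℕ} (π : Equiv.Perm (Fin n)) (j : Fin n) : Decidable (isUpperRecord π j) :=
  inferInstanceAs (Decidable (∀ k, k ≤ j → π k ≤ π j))

/-- number of proper (position ≥ 2, i.e. index ≥ 1) lower records -/
def properLowerCount {n : ℕ} (π : Equiv.Perm (Fin n)) : ℕ :=
  (univ.filter fun j : Fin n => 0 < j.val ∧ isLowerRecord π j).card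

/-- number of proper (position ≥ 2, i.e. index ≥ 1) upper records -/
def properUpperCount {n : ℕ} (π : Equiv.Perm (Fin n)) : ℕ :=
  (univ.filter fun j : Fin n => 0 < j.val ∧ isUpperRecord π j).card

/-- `A n ℓ u` = number of permutations of `{1,…,n}` with exactly `ℓ` proper lower
records and exactly `u` proper upper records. -/
def A (n ℓ u : ℕ) : ℕ :=
  (univ.filter fun π : Equiv.Perm (Fin n) =>
    properLowerCount π = ℓ ∧ properUpperCount π = u).card

open Equiv

lemma Fin.forall_le_castSucc_iff {n : ℕ} {j : Fin n} {P : Fin (n + 1) → Prop} :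
    (∀ k ≤ j.castSucc, P k) ↔ ∀ k ≤ j, P k.castSucc := by
  refine ⟨fun h k hk => h _ (Fin.castSucc_le_castSucc_iff.mpr hk), fun h k hk => ?_⟩
  obtain ⟨k, rfl⟩ := Fin.exists_castSucc_eq.mpr
    (Fin.ne_last_of_lt (hk.trans_lt (Fin.castSucc_lt_last j)))
  exact h k (Fin.castSucc_le_castSucc_iff.mp hk)

noncomputable def snocPerm {n : ℕ} (σ : Perm (Fin n)) (v : Fin (n + 1)) : Perm (Fin (n + 1)) :=
  Equiv.ofBijective (Fin.lastCases v fun j => v.succAbove (σ j)) <|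
    Finite.injective_iff_bijective.mp <| by
      intro a b hab
      rcases Fin.eq_castSucc_or_eq_last a with ⟨a, rfl⟩ | rfl <;>
        rcases Fin.eq_castSucc_or_eq_last b with ⟨b, rfl⟩ | rfl <;>
        simp only [Fin.lastCases_last, Fin.lastCases_castSucc] at hab
      · exact congrArg Fin.castSucc (σ.injective (Fin.succAbove_right_injective hab))
      · exact absurd hab (Fin.succAbove_ne v (σ a))
      · exact absurd hab.symm (Fin.succAbove_ne v (σ b))
      · rfl

section snocPerm

variable {n : ℕ} (σ : Perm (Fin n)) (v : Fin (n + 1))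

@[simp] lemma snocPerm_last : snocPerm σ v (Fin.last n) = v := by
  simp [snocPerm]

@[simp] lemma snocPerm_castSucc (j : Fin n) : snocPerm σ v j.castSucc = v.succAbove (σ j) := by
  simp [snocPerm]

lemma snocPerm_castSucc_le_castSucc_iff (j k : Fin n) :
    snocPerm σ v j.castSucc ≤ snocPerm σ v k.castSucc ↔ σ j ≤ σ k := by
  simp [Fin.succAbove_le_succAbove_iff]

lemma isLowerRecord_snocPerm_castSucc (j : Fin n) :
    isLowerRecord (snocPerm σ v) j.castSucc ↔ isLowerRecord σ j := by
  simp only [isLowerRecord, Fin.forall_le_castSucc_iff, snocPerm_castSucc_le_castSucc_iff]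

lemma isUpperRecord_snocPerm_castSucc (j : Fin n) :
    isUpperRecord (snocPerm σ v) j.castSucc ↔ isUpperRecord σ j := by
  simp only [isUpperRecord, Fin.forall_le_castSucc_iff, snocPerm_castSucc_le_castSucc_iff]

lemma isLowerRecord_snocPerm_last : isLowerRecord (snocPerm σ v) (Fin.last n) ↔ v = 0 := by
  refine ⟨fun h => ?_, fun h k _ => by simp [h]⟩
  simpa using h ((snocPerm σ v).symm 0) (Fin.le_last _)

lemma isUpperRecord_snocPerm_last :
    isUpperRecord (snocPerm σ v) (Fin.last n) ↔ v = Fin.last n := by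
  refine ⟨fun h => ?_, fun h k _ => by simp [h, Fin.le_last]⟩
  simpa [Fin.last_le_iff] using h ((snocPerm σ v).symm (Fin.last n)) (Fin.le_last _)

end snocPerm

lemma bijective_snocPerm (n : ℕ) :
    Function.Bijective fun p : Perm (Fin n) × Fin (n + 1) => snocPerm p.1 p.2 := by
  refine (Fintype.bijective_iff_injective_and_card _).mpr ⟨?_, ?_⟩
  · rintro ⟨σ, v⟩ ⟨σ', v'⟩ h
    have hv : v = v' := by simpa using congrArg (· (Fin.last n)) h
    subst hv
    exact Prod.ext (Equiv.ext fun j => by simpa using congrArg (· j.castSucc) h) rfl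
  · simp [Fintype.card_perm, Nat.factorial_succ, mul_comm]

section snocPermCount

variable {n : ℕ} (σ : Perm (Fin (n + 1))) (v : Fin (n + 2))

lemma properLowerCount_snocPerm :
    properLowerCount (snocPerm σ v) = properLowerCount σ + if v = 0 then 1 else 0 := by
  simp only [properLowerCount, card_filter, Fin.sum_univ_castSucc, Fin.val_castSucc,
    isLowerRecord_snocPerm_castSucc, Fin.val_last, isLowerRecord_snocPerm_last]
  simp

lemma properUpperCount_snocPerm :
    properUpperCount (snocPerm σ v) = properUpperCount σ + if v = Fin.last _ then 1 else 0 := by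
  simp only [properUpperCount, card_filter, Fin.sum_univ_castSucc, Fin.val_castSucc,
    isUpperRecord_snocPerm_castSucc, Fin.val_last, isUpperRecord_snocPerm_last]
  simp

end snocPermCount

section recordWeight

variable {R : Type*} [CommSemiring R] (θ ζ : R)

def recordWeight {n : ℕ} (π : Perm (Fin n)) : R :=
  θ ^ properLowerCount π * ζ ^ properUpperCount π

lemma recordWeight_snocPerm {n : ℕ} (σ : Perm (Fin (n + 1))) (v : Fin (n + 2)) :
    recordWeight θ ζ (snocPerm σ v) =
      recordWeight θ ζ σ * ((if v = 0 then θ else 1) * if v = Fin.last _ then ζ else 1) := by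
  simp only [recordWeight, properLowerCount_snocPerm, properUpperCount_snocPerm, pow_add,
    pow_ite, pow_one, pow_zero]
  ring

lemma sum_ite_zero_mul_ite_last (n : ℕ) :
    ∑ v : Fin (n + 2), (if v = 0 then θ else 1) * (if v = Fin.last _ then ζ else 1) =
      θ + ζ + n := by
  rw [Fin.sum_univ_succ, Fin.sum_univ_castSucc]
  simp [add_assoc, add_comm ζ]

lemma sum_recordWeight_succ_succ (n : ℕ) :
    ∑ π : Perm (Fin (n + 2)), recordWeight θ ζ π =
      (∑ σ : Perm (Fin (n + 1)), recordWeight θ ζ σ) * (θ + ζ + n) := by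
  rw [← (bijective_snocPerm (n + 1)).sum_comp (recordWeight θ ζ), Fintype.sum_prod_type]
  simp only [recordWeight_snocPerm, ← mul_sum, sum_ite_zero_mul_ite_last, sum_mul]

theorem sum_recordWeight : ∀ n : ℕ,
    ∑ π : Perm (Fin n), recordWeight θ ζ π = ∏ j ∈ range (n - 1), (θ + ζ + j)
  | 0 => by simp [recordWeight, properLowerCount, properUpperCount]
  | 1 => by simp [recordWeight, properLowerCount, properUpperCount]
  | n + 2 => by
    rw [sum_recordWeight_succ_succ, sum_recordWeight (n + 1)]
    simp [prod_range_succ]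

end recordWeight

theorem stmt_3_general (n : ℕ) (θ ζ : ℝ) :
    (∑ π : Equiv.Perm (Fin n), θ ^ properLowerCount π * ζ ^ properUpperCount π)
      = (∏ j ∈ Finset.range (n - 1), (θ + ζ + (j : ℝ))) ∧
    (0 < θ → 0 < ζ →
      (∑ π : Equiv.Perm (Fin n),
          θ ^ properLowerCount π * ζ ^ properUpperCount π
            / ∏ j ∈ Finset.range (n - 1), (θ + ζ + (j : ℝ))) = 1 ∧
      ∀ π π' : Equiv.Perm (Fin n),
        properLowerCount π = properLowerCount π' →
        properUpperCount π = properUpperCount π' →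
        θ ^ properLowerCount π * ζ ^ properUpperCount π
            / (∏ j ∈ Finset.range (n - 1), (θ + ζ + (j : ℝ)))
          = θ ^ properLowerCount π' * ζ ^ properUpperCount π'
            / (∏ j ∈ Finset.range (n - 1), (θ + ζ + (j : ℝ)))) := by
  have hsum := sum_recordWeight θ ζ n
  refine ⟨hsum, fun hθ hζ => ⟨?_, fun π π' hℓ hu => by rw [hℓ, hu]⟩⟩
  have hprod : 0 < ∏ j ∈ range (n - 1), (θ + ζ + (j : ℝ)) := prod_pos fun j _ => by positivity
  rw [← sum_div]
  exact (div_eq_one_iff_eq hprod.ne').mpr hsum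

/-- the generating-function identity
`Σ_{π ∈ S_n} θ^{ℓ(π)} ζ^{u(π)} = ∏_{j=0}^{n−2} (θ+ζ+j)`, and in particular for
`θ, ζ > 0` the formula `P(π) = θ^{ℓ(π)} ζ^{u(π)}/(θ+ζ)_{n−1}` defines a probability
distribution on `S_n` giving equal probability to all permutations with the same
numbers of lower and upper records. -/
theorem stmt_3 (n : ℕ) (hn : 1 ≤ n) (θ ζ : ℝ) :
    (∑ π : Equiv.Perm (Fin n), θ ^ properLowerCount π * ζ ^ properUpperCount π)
      = (∏ j ∈ Finset.range (n - 1), (θ + ζ + (j : ℝ))) ∧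
    (0 < θ → 0 < ζ →
      (∑ π : Equiv.Perm (Fin n),
          θ ^ properLowerCount π * ζ ^ properUpperCount π
            / ∏ j ∈ Finset.range (n - 1), (θ + ζ + (j : ℝ))) = 1 ∧
      ∀ π π' : Equiv.Perm (Fin n),
        properLowerCount π = properLowerCount π' →
        properUpperCount π = properUpperCount π' →
        θ ^ properLowerCount π * ζ ^ properUpperCount π
            / (∏ j ∈ Finset.range (n - 1), (θ + ζ + (j : ℝ)))
          = θ ^ properLowerCount π' * ζ ^ properUpperCount π'
            / (∏ j ∈ Finset.range (n - 1), (θ + ζ + (j : ℝ)))) :=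
  stmt_3_general n θ ζ
end

section
/- For θ, ζ > 0 and n ≥ 2, let V_n(θ,ζ) be the variance of the number of proper lower records of a permutation distributed according to P_n^{(θ,ζ)}, i.e. V_n(θ,ζ) = Σ_{π ∈ S_n} ℓ(π)² P_n^{(θ,ζ)}(π) − (Σ_{π ∈ S_n} ℓ(π) P_n^{(θ,ζ)}(π))². Then V_n(θ,ζ)/log n → θ as n → ∞. -/
open Finset

/-- `P_n^{(θ,ζ)}(π) = θ^{ℓ(π)} ζ^{u(π)} / ∏_{j=0}^{n−2}(θ+ζ+j)`. -/
noncomputable def Ptz (θ ζ : ℝ) {n : ℕ} (π : Equiv.Perm (Fin n)) : ℝ :=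
  θ ^ properLowerCount π * ζ ^ properUpperCount π
    / ∏ j ∈ Finset.range (n - 1), (θ + ζ + (j : ℝ))

/-- the variance of the number of proper lower records under `P_n^{(θ,ζ)}` -/
noncomputable def varLower (θ ζ : ℝ) (n : ℕ) : ℝ :=
  (∑ π : Equiv.Perm (Fin n), (properLowerCount π : ℝ) ^ 2 * Ptz θ ζ π)
    - (∑ π : Equiv.Perm (Fin n), (properLowerCount π : ℝ) * Ptz θ ζ π) ^ 2

/-!
Deleting the last entry of a permutation of `Fin (n + 2)` and standardising the remaining ones is
a bijection onto `Perm (Fin (n + 1)) × Fin (n + 2)` (the second component being the deleted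
value). The deleted entry is a proper lower record iff its value is `0`, a proper upper record iff
it is maximal, and no other record changes. So under `P^{(θ,ζ)}` the last entry adds to `ℓ` an
independent Bernoulli variable of parameter `q_n = θ / (θ + ζ + n)`, and
`V_{n+1} = ∑_{j<n} q_j (1 - q_j) = θ ∑_{j<n} 1 / (θ + ζ + j) - θ² ∑_{j<n} 1 / (θ + ζ + j)²`.
The first sum is `log n + O(1)` by comparison with `log`, the second is bounded by a telescoping
sum.
-/

namespace Equiv.Perm

/-- The permutation of `Fin (n+1)` ending with the value `v` whose first `n` entries are in the
same relative order as `σ`. -/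
def snocValue {n : ℕ} (σ : Perm (Fin n)) (v : Fin (n + 1)) : Perm (Fin (n + 1)) :=
  (finSuccEquiv' (Fin.last n)).trans (σ.optionCongr.trans (finSuccEquiv' v).symm)

variable {n : ℕ} (σ : Perm (Fin n)) (v : Fin (n + 1))

@[simp] lemma snocValue_castSucc (i : Fin n) : σ.snocValue v i.castSucc = v.succAbove (σ i) := by
  simp [snocValue, finSuccEquiv'_last_apply_castSucc]

@[simp] lemma snocValue_last : σ.snocValue v (Fin.last n) = v := by
  simp [snocValue]

lemma bijective_snocValue :
    Function.Bijective fun p : Perm (Fin n) × Fin (n + 1) => p.1.snocValue p.2 := by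
  refine (Fintype.bijective_iff_injective_and_card _).2 ⟨?_, ?_⟩
  · rintro ⟨σ, v⟩ ⟨τ, w⟩ h
    have hv : v = w := by simpa using DFunLike.congr_fun h (Fin.last n)
    subst hv
    refine Prod.ext (Equiv.ext fun i => Fin.succAbove_right_injective (p := v) ?_) rfl
    simpa using DFunLike.congr_fun h i.castSucc
  · simp [Fintype.card_perm, Nat.factorial_succ, mul_comm]

lemma isLowerRecord_snocValue_castSucc (j : Fin n) :
    isLowerRecord (σ.snocValue v) j.castSucc ↔ isLowerRecord σ j := by
  simp only [isLowerRecord, Fin.forall_fin_succ', Fin.castSucc_le_castSucc_iff, snocValue_castSucc,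
    Fin.succAbove_le_succAbove_iff, snocValue_last, (Fin.castSucc_lt_last j).not_ge, false_imp_iff,
    and_true]

lemma isUpperRecord_snocValue_castSucc (j : Fin n) :
    isUpperRecord (σ.snocValue v) j.castSucc ↔ isUpperRecord σ j := by
  simp only [isUpperRecord, Fin.forall_fin_succ', Fin.castSucc_le_castSucc_iff, snocValue_castSucc,
    Fin.succAbove_le_succAbove_iff, snocValue_last, (Fin.castSucc_lt_last j).not_ge, false_imp_iff,
    and_true]

end Equiv.Perm

lemma isLowerRecord_last_iff {n : ℕ} (π : Equiv.Perm (Fin (n + 1))) :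
    isLowerRecord π (Fin.last n) ↔ π (Fin.last n) = 0 :=
  ⟨fun h => by simpa using h (π.symm 0) (Fin.le_last _), fun h k _ => by rw [h]; exact Fin.zero_le _⟩

lemma isUpperRecord_last_iff {n : ℕ} (π : Equiv.Perm (Fin (n + 1))) :
    isUpperRecord π (Fin.last n) ↔ π (Fin.last n) = Fin.last n :=
  ⟨fun h => le_antisymm (Fin.le_last _) (by simpa using h (π.symm (Fin.last n)) (Fin.le_last _)),
    fun h k _ => by rw [h]; exact Fin.le_last _⟩

lemma properLowerCount_snocValue {n : ℕ} (σ : Equiv.Perm (Fin (n + 1))) (v : Fin (n + 2)) :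
    properLowerCount (σ.snocValue v) = properLowerCount σ + if v = 0 then 1 else 0 := by
  simp only [properLowerCount, card_filter, Fin.sum_univ_castSucc, Fin.val_castSucc,
    Equiv.Perm.isLowerRecord_snocValue_castSucc, isLowerRecord_last_iff,
    Equiv.Perm.snocValue_last, Fin.val_last, Nat.succ_pos, true_and]

lemma properUpperCount_snocValue {n : ℕ} (σ : Equiv.Perm (Fin (n + 1))) (v : Fin (n + 2)) :
    properUpperCount (σ.snocValue v) = properUpperCount σ + if v = Fin.last _ then 1 else 0 := by
  simp only [properUpperCount, card_filter, Fin.sum_univ_castSucc, Fin.val_castSucc,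
    Equiv.Perm.isUpperRecord_snocValue_castSucc, isUpperRecord_last_iff,
    Equiv.Perm.snocValue_last, Fin.val_last, Nat.succ_pos, true_and]

lemma properLowerCount_fin_one (π : Equiv.Perm (Fin 1)) : properLowerCount π = 0 := by
  simp [properLowerCount, Fin.val_eq_zero]

lemma properUpperCount_fin_one (π : Equiv.Perm (Fin 1)) : properUpperCount π = 0 := by
  simp [properUpperCount, Fin.val_eq_zero]

lemma sum_fin_ite_zero_last {M : Type*} [AddCommMonoid M] (n : ℕ) (t : ℕ → ℕ → M) (ℓ u : ℕ) :
    ∑ v : Fin (n + 2), t (ℓ + if v = 0 then 1 else 0) (u + if v = Fin.last _ then 1 else 0)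
      = n • t ℓ u + t (ℓ + 1) u + t ℓ (u + 1) := by
  rw [Fin.sum_univ_succ, Fin.sum_univ_castSucc]
  have hlt (i : Fin n) : (i : ℕ) ≠ n := i.isLt.ne
  simp [Fin.ext_iff, hlt]
  abel

lemma sum_perm_succ_records {M : Type*} [AddCommMonoid M] (n : ℕ) (t : ℕ → ℕ → M) :
    ∑ π : Equiv.Perm (Fin (n + 2)), t (properLowerCount π) (properUpperCount π)
      = ∑ σ : Equiv.Perm (Fin (n + 1)), (n • t (properLowerCount σ) (properUpperCount σ)
          + t (properLowerCount σ + 1) (properUpperCount σ)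
          + t (properLowerCount σ) (properUpperCount σ + 1)) := by
  rw [← Equiv.Perm.bijective_snocValue.sum_comp, Fintype.sum_prod_type]
  simp only [properLowerCount_snocValue, properUpperCount_snocValue, sum_fin_ite_zero_last]

/-- The unnormalised `P_n^{(θ,ζ)}`-expectation of `f(ℓ(π))`. -/
noncomputable def lowerWeightedSum (θ ζ : ℝ) (n : ℕ) (f : ℕ → ℝ) : ℝ :=
  ∑ π : Equiv.Perm (Fin n),
    f (properLowerCount π) * (θ ^ properLowerCount π * ζ ^ properUpperCount π)

section lowerWeightedSum

variable (θ ζ : ℝ)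

lemma lowerWeightedSum_add (n : ℕ) (f g : ℕ → ℝ) :
    lowerWeightedSum θ ζ n (fun k => f k + g k)
      = lowerWeightedSum θ ζ n f + lowerWeightedSum θ ζ n g := by
  simp only [lowerWeightedSum, add_mul, sum_add_distrib]

lemma lowerWeightedSum_const_mul (n : ℕ) (a : ℝ) (f : ℕ → ℝ) :
    lowerWeightedSum θ ζ n (fun k => a * f k) = a * lowerWeightedSum θ ζ n f := by
  simp only [lowerWeightedSum, mul_sum, mul_assoc]

lemma lowerWeightedSum_fin_one (f : ℕ → ℝ) : lowerWeightedSum θ ζ 1 f = f 0 := by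
  simp [lowerWeightedSum, properLowerCount_fin_one, properUpperCount_fin_one]

lemma lowerWeightedSum_succ_succ (n : ℕ) (f : ℕ → ℝ) :
    lowerWeightedSum θ ζ (n + 2) f
      = (ζ + n) * lowerWeightedSum θ ζ (n + 1) f
        + θ * lowerWeightedSum θ ζ (n + 1) (fun k => f (k + 1)) := by
  rw [lowerWeightedSum, sum_perm_succ_records n fun ℓ u => f ℓ * (θ ^ ℓ * ζ ^ u),
    lowerWeightedSum, lowerWeightedSum, mul_sum, mul_sum, ← sum_add_distrib]
  refine sum_congr rfl fun σ _ => ?_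
  rw [nsmul_eq_mul]
  ring

lemma sum_mul_Ptz (n : ℕ) (f : ℕ → ℝ) :
    ∑ π : Equiv.Perm (Fin n), f (properLowerCount π) * Ptz θ ζ π
      = lowerWeightedSum θ ζ n f / ∏ j ∈ range (n - 1), (θ + ζ + j) := by
  simp only [lowerWeightedSum, Ptz, sum_div, mul_div_assoc]

lemma lowerWeightedSum_one (n : ℕ) :
    lowerWeightedSum θ ζ (n + 1) (fun _ => 1) = ∏ j ∈ range n, (θ + ζ + j) := by
  induction n with
  | zero => simp [lowerWeightedSum_fin_one]
  | succ n ih => rw [lowerWeightedSum_succ_succ, ih, prod_range_succ]; ring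

variable {θ ζ}

lemma lowerWeightedSum_natCast (hc : 0 < θ + ζ) (n : ℕ) :
    lowerWeightedSum θ ζ (n + 1) (fun k => k)
      = (∏ j ∈ range n, (θ + ζ + j)) * ∑ j ∈ range n, θ / (θ + ζ + j) := by
  induction n with
  | zero => simp [lowerWeightedSum_fin_one]
  | succ n ih =>
    have hcn : θ + ζ + n ≠ 0 := by positivity
    simp only [lowerWeightedSum_succ_succ, Nat.cast_succ, lowerWeightedSum_add,
      lowerWeightedSum_one, ih, prod_range_succ, sum_range_succ]
    field_simp
    ring

lemma lowerWeightedSum_natCast_sq (hc : 0 < θ + ζ) (n : ℕ) :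
    lowerWeightedSum θ ζ (n + 1) (fun k => (k : ℝ) ^ 2)
      = (∏ j ∈ range n, (θ + ζ + j)) * ((∑ j ∈ range n, θ / (θ + ζ + j)) ^ 2
          + ∑ j ∈ range n, (θ / (θ + ζ + j) - (θ / (θ + ζ + j)) ^ 2)) := by
  induction n with
  | zero => simp [lowerWeightedSum_fin_one]
  | succ n ih =>
    have hcn : θ + ζ + n ≠ 0 := by positivity
    have hsq : (fun k : ℕ => ((k + 1 : ℕ) : ℝ) ^ 2) = fun k : ℕ => ((k : ℝ) ^ 2 + 2 * k) + 1 := by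
      ext k; push_cast; ring
    rw [lowerWeightedSum_succ_succ, hsq, lowerWeightedSum_add, lowerWeightedSum_add,
      lowerWeightedSum_const_mul, lowerWeightedSum_natCast hc, lowerWeightedSum_one, ih]
    simp only [prod_range_succ, sum_range_succ]
    field_simp
    ring

lemma varLower_succ (hc : 0 < θ + ζ) (n : ℕ) :
    varLower θ ζ (n + 1) = ∑ j ∈ range n, (θ / (θ + ζ + j) - (θ / (θ + ζ + j)) ^ 2) := by
  have hZ : ∏ j ∈ range n, (θ + ζ + (j : ℝ)) ≠ 0 := prod_ne_zero_iff.2 fun j _ => by positivity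
  rw [varLower, sum_mul_Ptz θ ζ _ (fun k => (k : ℝ) ^ 2), sum_mul_Ptz θ ζ _ (fun k => (k : ℝ)),
    lowerWeightedSum_natCast_sq hc, lowerWeightedSum_natCast hc, Nat.add_sub_cancel]
  field_simp
  ring

end lowerWeightedSum

section Asymptotics

open Filter Real Asymptotics Topology

lemma inv_add_one_le_log_add_one_sub_log {x : ℝ} (hx : 0 < x) :
    (x + 1)⁻¹ ≤ log (x + 1) - log x := by
  have h := one_sub_inv_le_log_of_pos (show 0 < (x + 1) / x by positivity)
  rw [log_div (by positivity) hx.ne', inv_div] at h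
  calc (x + 1)⁻¹ = 1 - x / (x + 1) := by field_simp; ring
    _ ≤ _ := h

lemma log_add_one_sub_log_le_inv {x : ℝ} (hx : 0 < x) : log (x + 1) - log x ≤ x⁻¹ := by
  have h := log_le_sub_one_of_pos (show 0 < (x + 1) / x by positivity)
  rw [log_div (by positivity) hx.ne'] at h
  calc _ ≤ (x + 1) / x - 1 := h
    _ = x⁻¹ := by field_simp; ring

variable {c : ℝ}

lemma sum_range_log_add_one_sub_log (m : ℕ) :
    ∑ j ∈ range m, (log (c + j + 1) - log (c + j)) = log (c + m) - log c := by
  simpa [add_assoc] using sum_range_sub (fun j : ℕ => log (c + j)) m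

lemma sum_range_inv_sub_inv_add_one (m : ℕ) :
    ∑ j ∈ range m, ((c + j)⁻¹ - (c + j + 1)⁻¹) = c⁻¹ - (c + m)⁻¹ := by
  simpa [add_assoc] using sum_range_sub' (fun j : ℕ => (c + j)⁻¹) m

lemma log_add_sub_log_le_sum_inv (hc : 0 < c) (m : ℕ) :
    log (c + m) - log c ≤ ∑ j ∈ range m, (c + j)⁻¹ := by
  rw [← sum_range_log_add_one_sub_log]
  exact sum_le_sum fun j _ => log_add_one_sub_log_le_inv (by positivity)

lemma sum_inv_le_inv_add_log_add_sub_log (hc : 0 < c) (m : ℕ) :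
    ∑ j ∈ range m, (c + j)⁻¹ ≤ c⁻¹ + (log (c + m) - log c) := by
  have hlog : ∑ j ∈ range m, (c + j + 1)⁻¹ ≤ log (c + m) - log c := by
    rw [← sum_range_log_add_one_sub_log]
    exact sum_le_sum fun j _ => inv_add_one_le_log_add_one_sub_log (by positivity)
  have htel := sum_range_inv_sub_inv_add_one (c := c) m
  have hcm : 0 ≤ (c + m)⁻¹ := by positivity
  calc ∑ j ∈ range m, (c + j)⁻¹
      = ∑ j ∈ range m, ((c + j)⁻¹ - (c + j + 1)⁻¹) + ∑ j ∈ range m, (c + j + 1)⁻¹ := by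
        rw [← sum_add_distrib]; simp
    _ ≤ c⁻¹ + (log (c + m) - log c) := by linarith

lemma sum_inv_sq_le (hc : 0 < c) (m : ℕ) :
    ∑ j ∈ range m, ((c + j) ^ 2)⁻¹ ≤ (1 + c⁻¹) * c⁻¹ := by
  calc ∑ j ∈ range m, ((c + j) ^ 2)⁻¹
      ≤ ∑ j ∈ range m, (1 + c⁻¹) * ((c + j)⁻¹ - (c + j + 1)⁻¹) := by
        -- `c + j + 1 ≤ (1 + c⁻¹) (c + j)`
        refine sum_le_sum fun j _ => ?_
        have hj : 0 < c + j := by positivity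
        rw [inv_sub_inv hj.ne' (by positivity)]
        field_simp
        nlinarith
    _ = (1 + c⁻¹) * (c⁻¹ - (c + m)⁻¹) := by rw [← mul_sum, sum_range_inv_sub_inv_add_one]
    _ ≤ (1 + c⁻¹) * c⁻¹ := by gcongr; exact sub_le_self _ (by positivity)

lemma tendsto_div_of_isBigO_sub_mul {α : Type*} {l : Filter α} {f g : α → ℝ} {θ : ℝ}
    (hg : Tendsto g l atTop) (h : (fun x => f x - θ * g x) =O[l] (fun _ => (1 : ℝ))) :
    Tendsto (fun x => f x / g x) l (𝓝 θ) := by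
  have hlo := h.trans_isLittleO ((isLittleO_one_left_iff ℝ).2 (tendsto_norm_atTop_atTop.comp hg))
  have := hlo.tendsto_div_nhds_zero.add_const θ
  rw [zero_add] at this
  refine this.congr' ?_
  filter_upwards [hg.eventually_ne_atTop 0] with x hx
  field_simp
  ring

lemma tendsto_log_add_sub_log_add_one (c : ℝ) :
    Tendsto (fun m : ℕ => log (c + m) - log (m + 1)) atTop (𝓝 0) := by
  have h := ((tendsto_log_comp_add_sub_log c).sub (tendsto_log_comp_add_sub_log 1)).comp
    tendsto_natCast_atTop_atTop
  rw [sub_zero] at h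
  refine h.congr fun m => ?_
  simp only [Function.comp_apply, add_comm c]
  ring

lemma isBigO_sum_inv_sub_log (hc : 0 < c) :
    (fun m : ℕ => ∑ j ∈ range m, (c + j)⁻¹ - log (c + m)) =O[atTop] (fun _ => (1 : ℝ)) := by
  refine IsBigO.of_bound (|log c| + c⁻¹) (Eventually.of_forall fun m => ?_)
  have hlo := log_add_sub_log_le_sum_inv hc m
  have hhi := sum_inv_le_inv_add_log_add_sub_log hc m
  rw [norm_one, mul_one, Real.norm_eq_abs, abs_le]
  constructor <;> linarith [neg_abs_le (log c), le_abs_self (log c), inv_pos.2 hc]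

lemma isBigO_sum_inv_sq (hc : 0 < c) :
    (fun m : ℕ => ∑ j ∈ range m, ((c + j) ^ 2)⁻¹) =O[atTop] (fun _ => (1 : ℝ)) := by
  refine IsBigO.of_bound ((1 + c⁻¹) * c⁻¹) (Eventually.of_forall fun m => ?_)
  rw [norm_one, mul_one, Real.norm_of_nonneg (sum_nonneg fun j _ => by positivity)]
  exact sum_inv_sq_le hc m

lemma tendsto_sum_variance_bernoulli_div_log (θ : ℝ) (hc : 0 < c) :
    Tendsto (fun m : ℕ => (∑ j ∈ range m, (θ / (c + j) - (θ / (c + j)) ^ 2)) / log (m + 1))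
      atTop (𝓝 θ) := by
  have hL : Tendsto (fun m : ℕ => log ((m : ℝ) + 1)) atTop atTop :=
    tendsto_log_atTop.comp (tendsto_atTop_add_const_right _ 1 tendsto_natCast_atTop_atTop)
  refine tendsto_div_of_isBigO_sub_mul hL ?_
  refine ((((isBigO_sum_inv_sub_log hc).const_mul_left θ).sub
    ((isBigO_sum_inv_sq hc).const_mul_left (θ ^ 2))).add
    (((tendsto_log_add_sub_log_add_one c).isBigO_one ℝ).const_mul_left θ)).congr_left fun m => ?_
  simp only [sum_sub_distrib, div_eq_mul_inv, mul_pow, inv_pow, ← mul_sum]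
  ring

end Asymptotics

/-- `V_n(θ,ζ)/log n → θ` as `n → ∞`. -/
theorem stmt_9 (θ ζ : ℝ) (hθ : 0 < θ) (hζ : 0 < ζ) :
    Filter.Tendsto (fun n : ℕ => varLower θ ζ n / Real.log n) Filter.atTop (nhds θ) := by
  have hc : 0 < θ + ζ := add_pos hθ hζ
  rw [← Filter.tendsto_add_atTop_iff_nat 1]
  refine (tendsto_sum_variance_bernoulli_div_log θ hc).congr fun m => ?_
  rw [varLower_succ hc, Nat.cast_succ]
end
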